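/- Let K ∈ ℕ, ρ > 0, p ∈ (0,1), and define g(γ) = 1 − q₀₁(γ) − q₁₀(γ) where q₀₁(γ) = exp(−γ) and q₁₀(γ) = Σ_{j=1}^K C(K,j)·(p^j(1−p)^{K−j}/(1−(1−p)^K))·(1 − exp(−γ/(jρ+1))). If γ satisfies exp(−γ) = Σ_{j=1}^K C(K,j)·(p^j(1−p)^{K−j}/(1−(1−p)^K))·exp(−γ/(jρ+1))/(jρ+1), then g(γ) = Σ_{j=1}^K C(K,j)·(p^j(1−p)^{K−j}/(1−(1−p)^K))·(jρ/(jρ+1))·exp(−γ/(jρ+1)) ≥ 0. -/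
import Mathlib


open Real Finset

/-- At a stationary point `γ` of the objective, `1 - q₀₁(γ) - q₁₀(γ)` has a closed form as a
nonnegative weighted sum. -/
theorem one_sub_q01_sub_q10_at_stationary (K : ℕ) (ρ p γ : ℝ) (hρ : 0 < ρ)
    (hp : p ∈ Set.Ioo (0 : ℝ) 1)
    (q₀₁ q₁₀ : ℝ)
    (hq₀₁ : q₀₁ = Real.exp (-γ))
    (hq₁₀ : q₁₀ = ∑ j ∈ Finset.Icc 1 K, (K.choose j : ℝ) *
      (p ^ j * (1 - p) ^ (K - j) / (1 - (1 - p) ^ K)) *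
      (1 - Real.exp (-γ / (j * ρ + 1))))
    (hstat : Real.exp (-γ) =
      ∑ j ∈ Finset.Icc 1 K, (K.choose j : ℝ) *
        (p ^ j * (1 - p) ^ (K - j) / (1 - (1 - p) ^ K)) *
        (Real.exp (-γ / (j * ρ + 1)) / (j * ρ + 1))) :
    1 - q₀₁ - q₁₀ =
      ∑ j ∈ Finset.Icc 1 K, (K.choose j : ℝ) *
        (p ^ j * (1 - p) ^ (K - j) / (1 - (1 - p) ^ K)) *
        (j * ρ / (j * ρ + 1) * Real.exp (-γ / (j * ρ + 1))) ∧
    0 ≤ 1 - q₀₁ - q₁₀ := by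
  obtain ⟨hp0, hp1⟩ := hp
  rcases Nat.eq_zero_or_pos K with hK | hK
  · subst hK
    simp only [Finset.Icc_eq_empty_of_lt (by norm_num : (1:ℕ) > 0), Finset.sum_empty] at hstat
    exact absurd hstat (Real.exp_pos _).ne'
  have h1p : 0 < 1 - p := by linarith
  have hlt : (1 - p) ^ K < 1 := pow_lt_one₀ (by linarith) (by linarith) hK.ne'
  have hD : 0 < 1 - (1 - p) ^ K := by linarith
  -- binomial sum
  have hrange : Finset.range (K + 1) = insert 0 (Finset.Icc 1 K) := by
    ext x
    simp [Finset.mem_range, Finset.mem_Icc]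
    omega
  have hbin : ∑ j ∈ Finset.Icc 1 K, (K.choose j : ℝ) * (p ^ j * (1 - p) ^ (K - j))
      = 1 - (1 - p) ^ K := by
    have h := add_pow p (1 - p) K
    rw [show p + (1 - p) = 1 by ring, one_pow, hrange,
      Finset.sum_insert (by simp)] at h
    simp only [pow_zero, one_mul, Nat.sub_zero, Nat.choose_zero_right, Nat.cast_one, mul_one] at h
    have hc : ∑ x ∈ Finset.Icc 1 K, p ^ x * (1 - p) ^ (K - x) * (K.choose x : ℝ)
        = ∑ j ∈ Finset.Icc 1 K, (K.choose j : ℝ) * (p ^ j * (1 - p) ^ (K - j)) :=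
      Finset.sum_congr rfl (fun j _ => by ring)
    rw [hc] at h
    linarith
  have hw : ∑ j ∈ Finset.Icc 1 K, (K.choose j : ℝ) *
      (p ^ j * (1 - p) ^ (K - j) / (1 - (1 - p) ^ K)) = 1 := by
    have : ∑ j ∈ Finset.Icc 1 K, (K.choose j : ℝ) *
        (p ^ j * (1 - p) ^ (K - j) / (1 - (1 - p) ^ K))
        = (∑ j ∈ Finset.Icc 1 K, (K.choose j : ℝ) * (p ^ j * (1 - p) ^ (K - j))) / (1 - (1 - p) ^ K) := by
      rw [Finset.sum_div]
      apply Finset.sum_congr rfl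
      intro j hj; ring
    rw [this, hbin, div_self hD.ne']
  have key : 1 - q₀₁ - q₁₀ =
      ∑ j ∈ Finset.Icc 1 K, (K.choose j : ℝ) *
        (p ^ j * (1 - p) ^ (K - j) / (1 - (1 - p) ^ K)) *
        (j * ρ / (j * ρ + 1) * Real.exp (-γ / (j * ρ + 1))) := by
    subst hq₀₁ hq₁₀
    rw [hstat]
    rw [show ∀ S : Finset ℕ, ∀ f w : ℕ → ℝ, ∑ j ∈ S, w j * (1 - f j) = ∑ j ∈ S, w j - ∑ j ∈ S, w j * f j from
      fun S f w => by rw [← Finset.sum_sub_distrib]; apply Finset.sum_congr rfl; intro j _; ring]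
    rw [hw]
    set A := ∑ j ∈ Finset.Icc 1 K, (K.choose j : ℝ) *
        (p ^ j * (1 - p) ^ (K - j) / (1 - (1 - p) ^ K)) *
        (Real.exp (-γ / (j * ρ + 1)) / (j * ρ + 1)) with hA
    set B := ∑ j ∈ Finset.Icc 1 K, (K.choose j : ℝ) *
        (p ^ j * (1 - p) ^ (K - j) / (1 - (1 - p) ^ K)) *
        Real.exp (-γ / (j * ρ + 1)) with hB
    rw [show (1:ℝ) - A - (1 - B) = B - A by ring, hA, hB, ← Finset.sum_sub_distrib]
    apply Finset.sum_congr rfl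
    intro j hj
    have hj1 : (0:ℝ) < j * ρ + 1 := by positivity
    field_simp
    ring
  refine ⟨key, ?_⟩
  rw [key]
  apply Finset.sum_nonneg
  intro j hj
  have hj1 : (0:ℝ) < j * ρ + 1 := by positivity
  have : (0:ℝ) ≤ (j:ℝ) * ρ := by positivity
  apply mul_nonneg
  · apply mul_nonneg (Nat.cast_nonneg _)
    apply div_nonneg (by positivity) hD.le
  · apply mul_nonneg (div_nonneg this hj1.le) (Real.exp_pos _).le
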